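/- Let a and b be integers with 0 < a < b such that a does not divide b, and let i be a positive integer with b − ia > a. Then F(a, b − ia) ≠ F(a, b). (Note that a does not divide b − ia, so F(a, b − ia) is defined.) -/

import Mathlib

/-! Subtracting `i·a` keeps the tail `t` of the expansion `[q; t]` of `b / a` and lowers `q`
to `q - i`, so `F` can only agree if `i = 1`, `𝓙(a,b)` is odd and `𝓙(a,b-a)` is even.
But `𝓙(a,b) ≥ 1` forces `a₁ ≥ q > q - 1`, which makes `𝓙(a,b-a) = 1`. -/

/-- `cf a b` is the continued fraction expansion `[a₀, a₁, …, aₙ]` of `b / a`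
(for `0 < a`), computed by the Euclidean algorithm; the convention `aₙ > 1`
whenever `n > 0` holds automatically. -/
def cf (a b : ℕ) : List ℕ :=
  if h : a = 0 then [] else (b / a) :: cf (b % a) a
termination_by a
decreasing_by exact Nat.mod_lt _ (Nat.pos_of_ne_zero h)

/-- `𝓙(a,b)`: the largest nonnegative integer `j < n` such that
`a₀ = a₁ = ⋯ = a_{j−1} ≤ a_j` in the continued fraction `[a₀, …, aₙ]` of `b / a`
(for `j = 0` the condition is vacuous). -/
def Jfun (a b : ℕ) : ℕ :=
  Nat.findGreatest
    (fun j => j + 1 < (cf a b).length ∧ (∀ i < j, (cf a b).getD i 0 = (cf a b).getD 0 0) ∧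
      (cf a b).getD 0 0 ≤ (cf a b).getD j 0)
    ((cf a b).length - 2)

/-- `F(a,b) = ⌊b/a⌋` if `𝓙(a,b)` is even, and `F(a,b) = ⌊b/a⌋ − 1` if `𝓙(a,b)`
is odd. -/
def F (a b : ℕ) : ℕ := if Even (Jfun a b) then b / a else b / a - 1

def jIndex (l : List ℕ) : ℕ :=
  Nat.findGreatest
    (fun j => j + 1 < l.length ∧ (∀ i < j, l.getD i 0 = l.getD 0 0) ∧ l.getD 0 0 ≤ l.getD j 0)
    (l.length - 2)

theorem Jfun_eq_jIndex (a b : ℕ) : Jfun a b = jIndex (cf a b) := rfl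

theorem cf_of_ne_zero {a : ℕ} (b : ℕ) (ha : a ≠ 0) : cf a b = (b / a) :: cf (b % a) a := by
  rw [cf, dif_neg ha]

theorem cf_sub_mul {a b i : ℕ} (ha : a ≠ 0) (h : i * a ≤ b) :
    cf a (b - i * a) = (b / a - i) :: cf (b % a) a := by
  rw [cf_of_ne_zero _ ha, mul_comm, Nat.sub_mul_mod (by rwa [mul_comm]),
    Nat.sub_mul_div b a i]

section jIndex

variable {p q : ℕ} {t : List ℕ}

theorem jIndex_spec {l : List ℕ} (h : jIndex l ≠ 0) :
    jIndex l + 1 < l.length ∧ (∀ i < jIndex l, l.getD i 0 = l.getD 0 0) ∧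
      l.getD 0 0 ≤ l.getD (jIndex l) 0 := by
  unfold jIndex at h ⊢
  obtain ⟨m, -, hm, hPm⟩ := Nat.findGreatest_pos.mp (Nat.pos_of_ne_zero h)
  exact Nat.findGreatest_spec (P := fun j => j + 1 < l.length ∧ _) hm hPm

theorem two_le_length_of_jIndex_cons_ne_zero (h : jIndex (q :: t) ≠ 0) : 2 ≤ t.length := by
  have := (jIndex_spec h).1
  simp only [List.length_cons] at this
  omega

theorem le_head_of_jIndex_cons_ne_zero (h : jIndex (q :: t) ≠ 0) : q ≤ t.getD 0 0 := by
  -- either `𝓙 = 1` and `a₀ ≤ a₁`, or `𝓙 ≥ 2` and `a₀ = a₁`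
  obtain ⟨-, hprefix, hle⟩ := jIndex_spec h
  rcases (Nat.one_le_iff_ne_zero.mpr h).eq_or_lt with hJ | hJ
  · simpa [← hJ] using hle
  · simpa using (hprefix 1 hJ).ge

theorem jIndex_cons_eq_one (ht : 2 ≤ t.length) (hp : p < t.getD 0 0) : jIndex (p :: t) = 1 := by
  have hone : 1 ≤ jIndex (p :: t) :=
    Nat.le_findGreatest (by simp only [List.length_cons]; omega)
      ⟨by simp only [List.length_cons]; omega, by simp, by simpa using hp.le⟩
  by_contra hne
  have := (jIndex_spec (l := p :: t) (by omega)).2.1 1 (by omega)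
  simp only [List.getD_cons_succ, List.getD_cons_zero] at this
  omega

end jIndex

theorem F_ne_of_sub_mul_general (a b i : ℕ) (ha : 0 < a)
    (hi : 0 < i) (hgt : a < b - i * a) :
    F a (b - i * a) ≠ F a b := by
  intro hF
  have hia : i * a ≤ b := by omega
  have hq : i + 1 ≤ b / a := by
    rw [Nat.le_div_iff_mul_le ha, add_mul]
    omega
  have hcf := cf_of_ne_zero b ha.ne'
  have hcf' := cf_sub_mul ha.ne' hia
  have hdiv : (b - i * a) / a = b / a - i := by
    rw [mul_comm]
    exact Nat.sub_mul_div b a i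
  unfold F at hF
  rw [hdiv] at hF
  split_ifs at hF with hJ' hJ <;> try omega
  obtain rfl : i = 1 := by omega
  have hJ0 : jIndex (b / a :: cf (b % a) a) ≠ 0 := by
    rw [← hcf, ← Jfun_eq_jIndex]
    exact (Nat.not_even_iff_odd.mp hJ).pos.ne'
  have hJ1 := jIndex_cons_eq_one (p := b / a - 1) (two_le_length_of_jIndex_cons_ne_zero hJ0)
    (by have := le_head_of_jIndex_cons_ne_zero hJ0; omega)
  rw [Jfun_eq_jIndex, hcf', hJ1] at hJ'
  exact Nat.not_even_one hJ'

/-- For `0 < a < b` with `a ∤ b` and a positive integer `i` with `b − i·a > a`,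
one has `F(a, b − i·a) ≠ F(a, b)`. -/
theorem F_ne_of_sub_mul (a b i : ℕ) (ha : 0 < a) (hab : a < b) (hnd : ¬ a ∣ b)
    (hi : 0 < i) (hgt : a < b - i * a) :
    F a (b - i * a) ≠ F a b :=
  F_ne_of_sub_mul_general a b i ha hi hgt
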